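/- The function I : [0, π/2] → ℝ defined by I(a) = ∫_{0}^{a} cos(φ)·arcsin(sqrt(1 − cos²(a)/cos²(φ))) dφ is strictly increasing on [0, π/2]. In particular, for 0 ≤ ξ̄ < φ̄ ≤ π/2, the average number of effective satellites (λμ/π)·I(φ̄) with aerial platforms strictly exceeds the average number (λμ/π)·I(ξ̄) without aerial platforms. -/

import Mathlib

/-!
Let `0 ≤ a < b ≤ π/2`. On `[0, a]` the integrand `cos φ · arcsin √(1 - cos² b / cos² φ)` for the
cap angle `b` dominates the one for `a`, since `cos² b ≤ cos² a`; on `(a, b)` it is strictly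
positive, since `cos b < cos φ`. So enlarging the cap raises the integrand on the old range and
adds a region of positive mass.
-/

open Real Set intervalIntegral

noncomputable def capIntegrand (a φ : ℝ) : ℝ :=
  cos φ * arcsin (√(1 - cos a ^ 2 / cos φ ^ 2))

lemma arcsin_sqrt_one_sub_sq_div_sq_le {x y z : ℝ} (hy : 0 ≤ y) (hyz : y ≤ z) :
    arcsin (√(1 - z ^ 2 / x ^ 2)) ≤ arcsin (√(1 - y ^ 2 / x ^ 2)) := by
  gcongr

lemma arcsin_sqrt_one_sub_sq_div_sq_pos {x y : ℝ} (hy : 0 ≤ y) (hyx : y < x) :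
    0 < arcsin (√(1 - y ^ 2 / x ^ 2)) := by
  have hx : 0 < x := hy.trans_lt hyx
  have : y ^ 2 / x ^ 2 < 1 := (div_lt_one (by positivity)).2 (by gcongr)
  exact arcsin_pos.2 (sqrt_pos.2 (by linarith))

lemma intervalIntegrable_capIntegrand (a u v : ℝ) :
    IntervalIntegrable (capIntegrand a) MeasureTheory.volume u v := by
  refine (intervalIntegrable_const (c := π / 2)).mono_fun' ?_ ?_
  · unfold capIntegrand
    fun_prop
  · refine Filter.Eventually.of_forall fun φ => ?_
    change ‖cos φ * arcsin (√(1 - cos a ^ 2 / cos φ ^ 2))‖ ≤ π / 2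
    rw [norm_mul]
    calc ‖cos φ‖ * ‖arcsin (√(1 - cos a ^ 2 / cos φ ^ 2))‖ ≤ 1 * (π / 2) := by
          gcongr
          · exact abs_cos_le_one φ
          · exact abs_le.2 ⟨neg_pi_div_two_le_arcsin _, arcsin_le_pi_div_two _⟩
      _ = π / 2 := one_mul _

lemma capIntegrand_le_capIntegrand {a b φ : ℝ} (ha : 0 ≤ a) (hab : a ≤ b) (hb : b ≤ π / 2)
    (hφ : φ ∈ Icc 0 (π / 2)) : capIntegrand a φ ≤ capIntegrand b φ := by
  have hcos_b : 0 ≤ cos b := cos_nonneg_of_mem_Icc ⟨by linarith [pi_pos], hb⟩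
  have hcos_φ : 0 ≤ cos φ := cos_nonneg_of_mem_Icc ⟨by linarith [pi_pos, hφ.1], hφ.2⟩
  exact mul_le_mul_of_nonneg_left (arcsin_sqrt_one_sub_sq_div_sq_le hcos_b
    (cos_le_cos_of_nonneg_of_le_pi ha (by linarith [pi_pos]) hab)) hcos_φ

lemma capIntegrand_pos {b φ : ℝ} (hb : b ≤ π / 2) (hφ : φ ∈ Ioo 0 b) :
    0 < capIntegrand b φ := by
  have hcos_b : 0 ≤ cos b := cos_nonneg_of_mem_Icc ⟨by linarith [pi_pos, hφ.1, hφ.2], hb⟩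
  have hcos_φ : 0 < cos φ := cos_pos_of_mem_Ioo ⟨by linarith [pi_pos, hφ.1], by linarith [hφ.2]⟩
  exact mul_pos hcos_φ (arcsin_sqrt_one_sub_sq_div_sq_pos hcos_b
    (cos_lt_cos_of_nonneg_of_le_pi hφ.1.le (by linarith [pi_pos]) hφ.2))

theorem strictMonoOn_integral_capIntegrand :
    StrictMonoOn (fun a => ∫ φ in (0 : ℝ)..a, capIntegrand a φ) (Icc 0 (π / 2)) := by
  intro a ha b hb hab
  have h_old : ∫ φ in (0 : ℝ)..a, capIntegrand a φ ≤ ∫ φ in (0 : ℝ)..a, capIntegrand b φ :=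
    integral_mono_on ha.1 (intervalIntegrable_capIntegrand _ _ _)
      (intervalIntegrable_capIntegrand _ _ _) fun φ hφ =>
        capIntegrand_le_capIntegrand ha.1 hab.le hb.2 ⟨hφ.1, hφ.2.trans ha.2⟩
  have h_new : 0 < ∫ φ in a..b, capIntegrand b φ :=
    intervalIntegral_pos_of_pos_on (intervalIntegrable_capIntegrand _ _ _)
      (fun φ hφ => capIntegrand_pos hb.2 ⟨ha.1.trans_lt hφ.1, hφ.2⟩) hab
  calc ∫ φ in (0 : ℝ)..a, capIntegrand a φ
      < (∫ φ in (0 : ℝ)..a, capIntegrand b φ) + ∫ φ in a..b, capIntegrand b φ := by linarith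
    _ = ∫ φ in (0 : ℝ)..b, capIntegrand b φ :=
      integral_add_adjacent_intervals (intervalIntegrable_capIntegrand _ _ _)
        (intervalIntegrable_capIntegrand _ _ _)

/-- The effective-satellite integral of Theorem 1 is strictly increasing in the cap angle
on `[0, π/2]`; in particular, with aerial platforms (cap angle `φ̄`) the average number of
effective satellites `(λμ/π)·I(φ̄)` strictly exceeds the number `(λμ/π)·I(ξ̄)` without
aerial platforms, whenever `0 ≤ ξ̄ < φ̄ ≤ π/2`. -/
theorem effective_satellites_strictMono (lam μ : ℝ) (hlam : 0 < lam) (hμ : 0 < μ) :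
    StrictMonoOn (fun a : ℝ => ∫ φ in (0:ℝ)..a,
        Real.cos φ * Real.arcsin (Real.sqrt (1 - Real.cos a ^ 2 / Real.cos φ ^ 2)))
      (Set.Icc 0 (Real.pi / 2))
    ∧ ∀ ξ φb : ℝ, 0 ≤ ξ → ξ < φb → φb ≤ Real.pi / 2 →
        (lam * μ / Real.pi) * (∫ φ in (0:ℝ)..ξ,
            Real.cos φ * Real.arcsin (Real.sqrt (1 - Real.cos ξ ^ 2 / Real.cos φ ^ 2)))
          < (lam * μ / Real.pi) * (∫ φ in (0:ℝ)..φb,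
              Real.cos φ * Real.arcsin (Real.sqrt (1 - Real.cos φb ^ 2 / Real.cos φ ^ 2))) := by
  refine ⟨strictMonoOn_integral_capIntegrand, fun ξ φb hξ hlt hφb => ?_⟩
  have h_scale : 0 < lam * μ / π := by positivity
  exact mul_lt_mul_of_pos_left (strictMonoOn_integral_capIntegrand
    ⟨hξ, hlt.le.trans hφb⟩ ⟨hξ.trans hlt.le, hφb⟩ hlt) h_scale
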